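/- Fix n ≥ 2. Suppose U : [0,1] → ℝ is continuous with U(0) = U(1) = 0, U is affine on each interval ((k−1)/n, k/n) for k = 1,...,n, and U'_−(k/n) − U'_+(k/n) = 4n·U(k/n) for k = 1,...,n−1. Then U ≡ 0. -/
import Mathlib

open Filter Topology

lemma affine_endpoint (f : ℝ → ℝ) {a b c d p : ℝ} (hab : a < b)
    (h0 : 0 ≤ a) (h1 : b ≤ 1) (hp : p ∈ Set.Icc a b)
    (hf : ContinuousOn f (Set.Icc 0 1))
    (heq : ∀ x ∈ Set.Ioo a b, f x = c + d * x) : f p = c + d * p := by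
  have hsub : Set.Ioo a b ⊆ Set.Icc 0 1 := fun x hx =>
    ⟨le_trans h0 hx.1.le, le_trans hx.2.le h1⟩
  have hpI : p ∈ Set.Icc (0:ℝ) 1 := ⟨le_trans h0 hp.1, le_trans hp.2 h1⟩
  haveI : (𝓝[Set.Ioo a b] p).NeBot := by
    apply mem_closure_iff_nhdsWithin_neBot.mp
    rw [closure_Ioo hab.ne]; exact hp
  have h1t : Tendsto f (𝓝[Set.Ioo a b] p) (𝓝 (f p)) :=
    (hf p hpI).mono_left (nhdsWithin_mono _ hsub)
  have h2t : Tendsto (fun x => c + d * x) (𝓝[Set.Ioo a b] p) (𝓝 (c + d * p)) :=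
    ((continuous_const.add (continuous_const.mul continuous_id)).tendsto p).mono_left
      nhdsWithin_le_nhds
  have h3 : Tendsto f (𝓝[Set.Ioo a b] p) (𝓝 (c + d * p)) :=
    h2t.congr' (Filter.eventuallyEq_of_mem self_mem_nhdsWithin fun x hx => (heq x hx).symm)
  exact tendsto_nhds_unique h1t h3

theorem stmt11 (n : ℕ) (hn : 2 ≤ n) (U : ℝ → ℝ) (A B : ℕ → ℝ)
    (hcont : ContinuousOn U (Set.Icc 0 1))
    (hU0 : U 0 = 0) (hU1 : U 1 = 0)
    (haff : ∀ k : ℕ, 1 ≤ k → k ≤ n →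
      ∀ x ∈ Set.Ioo (((k : ℝ) - 1) / n) ((k : ℝ) / n), U x = A k + B k * x)
    (hjump : ∀ k : ℕ, 1 ≤ k → k ≤ n - 1 →
      B k - B (k + 1) = 4 * (n : ℝ) * U ((k : ℝ) / n)) :
    ∀ x ∈ Set.Icc (0 : ℝ) 1, U x = 0 := by
  have hn0 : (0:ℝ) < n := by positivity
  have hnne : (n:ℝ) ≠ 0 := ne_of_gt hn0
  -- value at endpoints of each subinterval
  have hval : ∀ k : ℕ, 1 ≤ k → k ≤ n → ∀ p ∈ Set.Icc (((k:ℝ)-1)/n) ((k:ℝ)/n),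
      U p = A k + B k * p := by
    intro k hk1 hkn p hp
    have hk1' : (1:ℝ) ≤ (k:ℝ) := by exact_mod_cast hk1
    have hkn' : (k:ℝ) ≤ n := by exact_mod_cast hkn
    refine affine_endpoint U ?_ ?_ ?_ hp hcont (haff k hk1 hkn)
    · rw [div_lt_div_iff₀ hn0 hn0]; nlinarith
    · apply div_nonneg (by linarith) hn0.le
    · rw [div_le_one hn0]; exact hkn'
  -- slope formula
  have hB : ∀ k : ℕ, 1 ≤ k → k ≤ n →
      B k = n * (U ((k:ℝ)/n) - U (((k:ℝ)-1)/n)) := by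
    intro k hk1 hkn
    have hk1' : (1:ℝ) ≤ (k:ℝ) := by exact_mod_cast hk1
    have h1 := hval k hk1 hkn ((k:ℝ)/n) ⟨by rw [div_le_div_iff₀ hn0 hn0]; nlinarith, le_refl _⟩
    have h2 := hval k hk1 hkn (((k:ℝ)-1)/n) ⟨le_refl _, by rw [div_le_div_iff₀ hn0 hn0]; nlinarith⟩
    rw [h1, h2]
    field_simp
    ring
  -- cast lemma: U at (k-1)/n with nat cast
  have hcastsub : ∀ k : ℕ, 1 ≤ k → (((k:ℝ)-1)/n) = (((k-1:ℕ):ℝ)/n) := by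
    intro k hk1
    rw [Nat.cast_sub hk1, Nat.cast_one]
  -- recurrence
  have hrec : ∀ k : ℕ, 1 ≤ k → k ≤ n - 1 →
      U (((k+1:ℕ):ℝ)/n) = -2 * U ((k:ℝ)/n) - U (((k-1:ℕ):ℝ)/n) := by
    intro k hk1 hkn1
    have hkn : k ≤ n := le_trans hkn1 (Nat.sub_le n 1)
    have hk1n : k + 1 ≤ n := by omega
    have e1 := hB k hk1 hkn
    have e2 := hB (k+1) (by omega) hk1n
    have hj := hjump k hk1 hkn1
    rw [hcastsub k hk1] at e1
    have hc : (((k+1:ℕ):ℝ)-1)/n = (k:ℝ)/n := by push_cast; ring_nf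
    rw [hc] at e2
    rw [e1, e2] at hj
    have : (n:ℝ) ≠ 0 := hnne
    push_cast at hj ⊢
    nlinarith [hj]
  -- closed form u_k = (-1)^(k+1) * k * u_1
  have key : ∀ k : ℕ, k + 1 ≤ n →
      U ((k:ℝ)/n) = (-1:ℝ)^(k+1) * k * U (1/n) ∧
      U (((k+1:ℕ):ℝ)/n) = (-1:ℝ)^(k+2) * (k+1) * U (1/n) := by
    intro k
    induction k with
    | zero =>
      intro _
      constructor
      · simp [hU0]
      · norm_num
    | succ m ih =>
      intro h
      have hm : m + 1 ≤ n := by omega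
      obtain ⟨ih1, ih2⟩ := ih hm
      refine ⟨by push_cast at ih2 ⊢; linarith [ih2], ?_⟩
      have hrec' := hrec (m+1) (by omega) (by omega)
      have hc : ((m+1-1:ℕ):ℝ) = (m:ℝ) := by simp
      rw [hc] at hrec'
      rw [hrec']
      push_cast at ih1 ih2 ⊢
      rw [ih1, ih2]
      ring
  -- u_1 = 0
  have hu1 : U (1/n) = 0 := by
    have h := (key (n-1) (by omega)).2
    have hc : ((n-1+1:ℕ):ℝ) = (n:ℝ) := by congr 1; omega
    rw [hc, div_self hnne, hU1] at h
    have hc2 : (((n-1:ℕ):ℝ)+1) = (n:ℝ) := by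
      rw [Nat.cast_sub (by omega : 1 ≤ n), Nat.cast_one]; ring
    rw [hc2] at h
    rcases mul_eq_zero.mp h.symm with h' | h'
    · rcases mul_eq_zero.mp h' with h'' | h''
      · exact absurd h'' (pow_ne_zero _ (by norm_num))
      · exact absurd h'' hnne
    · exact h'
  -- all node values zero
  have hnode : ∀ k : ℕ, k ≤ n → U ((k:ℝ)/n) = 0 := by
    intro k hk
    rcases Nat.lt_or_ge k n with h | h
    · have := (key k (by omega)).1
      rw [hu1] at this; simpa using this
    · have hkn : k = n := le_antisymm hk h
      subst hkn
      rw [div_self hnne]; exact hU1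
  -- coefficients zero
  have hA : ∀ k : ℕ, 1 ≤ k → k ≤ n → A k = 0 ∧ B k = 0 := by
    intro k hk1 hkn
    have hBk : B k = 0 := by
      have := hB k hk1 hkn
      rw [hcastsub k hk1, hnode k hkn, hnode (k-1) (by omega)] at this
      simpa using this
    have h1 := hval k hk1 hkn ((k:ℝ)/n)
      ⟨by rw [div_le_div_iff₀ hn0 hn0]; nlinarith, le_refl _⟩
    rw [hnode k hkn, hBk] at h1
    constructor
    · linarith [h1]
    · exact hBk
  -- conclude
  intro x hx
  rcases eq_or_lt_of_le hx.1 with h0 | h0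
  · rw [← h0]; exact hU0
  · set k := ⌈(n:ℝ)*x⌉₊ with hk
    have hpos : (0:ℝ) < n * x := by positivity
    have hk1 : 1 ≤ k := by
      rw [hk]; exact Nat.one_le_ceil_iff.mpr hpos
    have hkn : k ≤ n := by
      rw [hk]; apply Nat.ceil_le.mpr
      calc (n:ℝ) * x ≤ n * 1 := by nlinarith [hx.2]
        _ = (n:ℕ) := by ring
    have hle : (n:ℝ) * x ≤ k := Nat.le_ceil _
    have hgt : (k:ℝ) - 1 < n * x := by
      have : (k - 1 : ℕ) < ⌈(n:ℝ)*x⌉₊ := by omega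
      have := Nat.lt_ceil.mp this
      rw [Nat.cast_sub hk1, Nat.cast_one] at this
      exact this
    have hxle : x ≤ (k:ℝ)/n := by
      rw [le_div_iff₀ hn0]; linarith [hle]
    have hxgt : ((k:ℝ)-1)/n < x := by
      rw [div_lt_iff₀ hn0]; linarith [hgt]
    obtain ⟨hAk, hBk⟩ := hA k hk1 hkn
    rcases eq_or_lt_of_le hxle with he | hlt
    · rw [he, hnode k hkn]
    · rw [haff k hk1 hkn x ⟨hxgt, hlt⟩, hAk, hBk]; ring
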